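/- arXiv:0711.2503 — 2 statements merged into one kernel-verified Lean document; each statement's English description precedes it below -/
import Mathlib

section
/- Let n ≥ 5 be prime and let g = g^A be the Alltop window with entries g^A_q = n^{-1/2} e^{2πi q³/n}, q = 0,…,n−1. If S ∈ ℕ satisfies S < (√n + 1)/2, then for every S-sparse vector x ∈ ℂ^{n²}, Basis Pursuit recovers x from y = Ψ_{g^A} x, i.e. x is the unique minimizer of ‖z‖₁ over all z with Ψ_{g^A} z = y. -/
open MeasureTheory Complex Matrix

noncomputable section

/-- The time-frequency shift `π(λ) = M_ℓ T_k` applied to a window `g ∈ ℂ^n`: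
`(π(k,ℓ)g)_q = e^{2πiℓq/n} g_{(k+q) mod n}`. -/
def tfShift (n : ℕ) (lam : Fin n × Fin n) (g : Fin n → ℂ) : Fin n → ℂ :=
  fun q => Complex.exp (2 * Real.pi * Complex.I * (lam.2 : ℕ) * (q : ℕ) / n) * g (lam.1 + q)

/-- The time-frequency shift `π(λ) = M_ℓ T_k` as an `n × n` matrix. -/
def tfMatrix (n : ℕ) (lam : Fin n × Fin n) : Matrix (Fin n) (Fin n) ℂ :=
  Matrix.of fun q p =>
    if p = lam.1 + q then Complex.exp (2 * Real.pi * Complex.I * (lam.2 : ℕ) * (q : ℕ) / n) else 0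

/-- The Gabor synthesis matrix `Ψ_g ∈ ℂ^{n × n²}`, columns `π(λ)g`. -/
def gaborMatrix (n : ℕ) (g : Fin n → ℂ) : Matrix (Fin n) (Fin n × Fin n) ℂ :=
  Matrix.of fun q lam => tfShift n lam g q

/-- The column submatrix of a matrix, columns restricted to a finite index set `Λ`. -/
def colSub {ι κ : Type*} (A : Matrix ι κ ℂ) (Λ : Finset κ) : Matrix ι ↥Λ ℂ :=
  Matrix.of fun i j => A i (j : κ)

/-- The column submatrix `Ψ_Λ` of the Gabor synthesis matrix. -/
def gaborSub (n : ℕ) (g : Fin n → ℂ) (Λ : Finset (Fin n × Fin n)) : Matrix (Fin n) ↥Λ ℂ :=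
  colSub (gaborMatrix n g) Λ

/-- The ℓ¹ norm of a vector in `ℂ^ι`. -/
def l1norm {ι : Type*} [Fintype ι] (z : ι → ℂ) : ℝ := ∑ i, ‖z i‖

/-- The ℓ² (Euclidean) norm of a vector in `ℂ^ι`. -/
def l2norm {ι : Type*} [Fintype ι] (z : ι → ℂ) : ℝ := Real.sqrt (∑ i, ‖z i‖ ^ 2)

/-- The standard Hermitian inner product `⟨u,v⟩ = ∑ u_i conj(v_i)` on `ℂ^ι`. -/
def dotc {ι : Type*} [Fintype ι] (u v : ι → ℂ) : ℂ := ∑ i, u i * (starRingEnd ℂ) (v i)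

/-- `x` is the unique minimizer of the ℓ¹ norm among all `z` with `A z = A x`
(Basis Pursuit recovers `x` from `y = A x`). -/
def BPrecovers {ι κ : Type*} [Fintype ι] [Fintype κ] (A : Matrix ι κ ℂ) (x : κ → ℂ) : Prop :=
  ∀ z : κ → ℂ, A.mulVec z = A.mulVec x → z ≠ x → l1norm x < l1norm z

/-- The spectral norm (`ℓ² → ℓ²` operator norm) of a complex matrix. -/
def specNorm {ι κ : Type*} [Fintype ι] [Fintype κ] [DecidableEq κ] (A : Matrix ι κ ℂ) : ℝ :=
  ‖LinearMap.toContinuousLinearMap (Matrix.toEuclideanLin A)‖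

/-- The Frobenius norm of a complex matrix. -/
def frobNorm {ι κ : Type*} [Fintype ι] [Fintype κ] (A : Matrix ι κ ℂ) : ℝ :=
  Real.sqrt (∑ i, ∑ j, ‖A i j‖ ^ 2)

/-- The complex sign: `sgn(z) = z/|z|` for `z ≠ 0`, and `sgn(0) = 0`. -/
def csgn (z : ℂ) : ℂ := if z = 0 then 0 else z / ‖z‖

/-- The associated Stirling number of the first kind `d₂(m,s)`: the number of permutations
of an `m`-element set consisting of exactly `s` disjoint cycles, each of length at least 2
(equivalently, fixed-point-free permutations of `Fin m` with exactly `s` cycles). -/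
def d2 (m s : ℕ) : ℕ :=
  Fintype.card {σ : Equiv.Perm (Fin m) // σ.cycleType.card = s ∧ σ.cycleType.sum = m}

instance : MeasurableSpace Circle := borel Circle
instance : BorelSpace Circle := ⟨rfl⟩

/-- The normalized Haar (uniform) probability measure on the circle group
`{z ∈ ℂ : |z| = 1}`. -/
def circleHaar : Measure Circle :=
  Measure.haarMeasure (⊤ : TopologicalSpace.PositiveCompacts Circle)

instance : IsProbabilityMeasure circleHaar :=
  ⟨by simpa [circleHaar] using Measure.haarMeasure_self (K₀ := (⊤ : TopologicalSpace.PositiveCompacts Circle))⟩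

/-- The random unimodular window `g^R_q = ε_q/√n` determined by the phases `ε : Fin n → Circle`. -/
def windowR (n : ℕ) (ε : Fin n → Circle) : Fin n → ℂ :=
  fun q => (ε q : ℂ) / Real.sqrt n

/-- The distribution of `n` independent Haar-uniform points on the circle
(the law of the random phases `ε_0, …, ε_{n-1}`). -/
def Pmeas (n : ℕ) : Measure (Fin n → Circle) := Measure.pi fun _ => circleHaar

/-- The extension-by-zero matrix `E_Λ : ℂ^Λ → ℂ^κ`. -/
def extMat {κ : Type*} [DecidableEq κ] (Λ : Finset κ) : Matrix κ ↥Λ ℂ :=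
  Matrix.of fun j lam => if j = (lam : κ) then 1 else 0

/-- Pad a matrix with columns indexed by `Λ` to one with columns indexed by all of `κ`,
filling with zero columns: the matrix `K R_Λ` where `R_Λ` is the restriction operator. -/
def padCols {ι κ : Type*} [DecidableEq κ] {Λ : Finset κ} (K : Matrix ι ↥Λ ℂ) : Matrix ι κ ℂ :=
  Matrix.of fun i j => if h : j ∈ Λ then K i ⟨j, h⟩ else 0

end

/-! The columns of `Ψ_g` have unit norm, and for the Alltop window their mutual coherence is
`1/√n`: the inner product of the columns at `(k, ℓ)` and `(k', ℓ')` is `1/n` times a sum over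
`ZMod n` of the standard additive character at a polynomial in the summation variable. For
`k = k'` it is linear and the sum vanishes; otherwise it is quadratic with leading coefficient
`3 (k - k') ≠ 0`, and expanding `|∑|²` and substituting `a = b + d` shows the sum has modulus `√n`.

Coherence `μ` forces every kernel vector `h` to satisfy `(1 + μ) |h_j| ≤ μ ‖h‖₁`, so on a set `Λ`
with `2 μ |Λ| < 1 + μ` it carries less `ℓ¹` mass than off `Λ`. This null space property makes
every `x` supported on `Λ` the unique `ℓ¹` minimiser in its fibre. -/

open Finset

section Coherence

variable {ι κ : Type*} [Fintype ι] [Fintype κ]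

structure ColumnCoherenceLE (A : Matrix ι κ ℂ) (μ : ℝ) : Prop where
  dotc_col_self : ∀ j, dotc (Aᵀ j) (Aᵀ j) = 1
  norm_dotc_col_le : ∀ j j', j ≠ j' → ‖dotc (Aᵀ j) (Aᵀ j')‖ ≤ μ

theorem dotc_mulVec_left (A : Matrix ι κ ℂ) (h : κ → ℂ) (v : ι → ℂ) :
    dotc (A *ᵥ h) v = ∑ m, h m * dotc (Aᵀ m) v := by
  simp only [dotc, Matrix.mulVec, dotProduct, Matrix.transpose_apply, sum_mul, mul_sum]
  rw [sum_comm]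
  exact sum_congr rfl fun _ _ => sum_congr rfl fun _ _ => by ring

theorem ColumnCoherenceLE.norm_le_mul_l1norm_sub {A : Matrix ι κ ℂ} {μ : ℝ}
    (hA : ColumnCoherenceLE A μ) {h : κ → ℂ} (hh : A *ᵥ h = 0) (j : κ) :
    ‖h j‖ ≤ μ * (l1norm h - ‖h j‖) := by
  classical
  have hsplit : h j + ∑ m ∈ univ.erase j, h m * dotc (Aᵀ m) (Aᵀ j) = 0 := by
    have := dotc_mulVec_left A h (Aᵀ j)
    rw [hh, ← add_sum_erase _ _ (mem_univ j), hA.dotc_col_self, mul_one] at this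
    simpa [dotc] using this.symm
  calc ‖h j‖ = ‖∑ m ∈ univ.erase j, h m * dotc (Aᵀ m) (Aᵀ j)‖ := by
        rw [eq_neg_of_add_eq_zero_left hsplit, norm_neg]
    _ ≤ ∑ m ∈ univ.erase j, ‖h m‖ * μ := by
        refine (norm_sum_le _ _).trans (sum_le_sum fun m hm => ?_)
        rw [norm_mul]
        exact mul_le_mul_of_nonneg_left (hA.norm_dotc_col_le m j (ne_of_mem_erase hm))
          (norm_nonneg _)
    _ = μ * (l1norm h - ‖h j‖) := by
        rw [← sum_mul, sum_erase_eq_sub (mem_univ j), l1norm, mul_comm]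

theorem bpRecovers_of_nullSpaceProperty [DecidableEq κ] (A : Matrix ι κ ℂ) (Λ : Finset κ)
    {x : κ → ℂ} (hx : ∀ j ∉ Λ, x j = 0)
    (hnsp : ∀ h, A *ᵥ h = 0 → h ≠ 0 → ∑ j ∈ Λ, ‖h j‖ < ∑ j ∈ Λᶜ, ‖h j‖) :
    BPrecovers A x := by
  intro z hz hne
  have hker : A *ᵥ (z - x) = 0 := by rw [Matrix.mulVec_sub, hz, sub_self]
  have hon : ∀ j ∈ Λ, ‖x j‖ - ‖(z - x) j‖ ≤ ‖z j‖ := fun j _ => by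
    rw [Pi.sub_apply, norm_sub_rev]
    linarith [norm_sub_norm_le (x j) (z j)]
  have hoff : ∀ j ∈ Λᶜ, ‖z j‖ = ‖(z - x) j‖ := fun j hj => by
    simp [hx j (mem_compl.mp hj)]
  have hlt := hnsp _ hker (sub_ne_zero.mpr hne)
  calc l1norm x = ∑ j ∈ Λ, ‖x j‖ :=
        (sum_subset (subset_univ Λ) fun j _ hj => by rw [hx j hj, norm_zero]).symm
    _ < ∑ j ∈ Λ, ‖z j‖ + ∑ j ∈ Λᶜ, ‖z j‖ := by
        have := sum_le_sum hon
        rw [sum_sub_distrib] at this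
        rw [sum_congr rfl hoff]
        linarith
    _ = l1norm z := by rw [l1norm, sum_add_sum_compl]

theorem ColumnCoherenceLE.nullSpaceProperty [DecidableEq κ] {A : Matrix ι κ ℂ} {μ : ℝ}
    (hA : ColumnCoherenceLE A μ) (hμ : 0 ≤ μ) (Λ : Finset κ) (hΛ : 2 * μ * #Λ < 1 + μ)
    {h : κ → ℂ} (hh : A *ᵥ h = 0) (hne : h ≠ 0) :
    ∑ j ∈ Λ, ‖h j‖ < ∑ j ∈ Λᶜ, ‖h j‖ := by
  set a := ∑ j ∈ Λ, ‖h j‖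
  set b := ∑ j ∈ Λᶜ, ‖h j‖
  have hT : l1norm h = a + b := (sum_add_sum_compl Λ _).symm
  have hpos : 0 < a + b := by
    obtain ⟨j, hj⟩ := Function.ne_iff.mp hne
    rw [← hT]
    exact sum_pos' (fun _ _ => norm_nonneg _) ⟨j, mem_univ j, norm_pos_iff.mpr hj⟩
  have ha : (1 + μ) * a ≤ #Λ * (μ * (a + b)) :=
    calc (1 + μ) * a = ∑ j ∈ Λ, (1 + μ) * ‖h j‖ := mul_sum _ _ _
      _ ≤ ∑ _j ∈ Λ, μ * (a + b) := sum_le_sum fun j _ => by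
          linarith [hT ▸ hA.norm_le_mul_l1norm_sub hh j]
      _ = #Λ * (μ * (a + b)) := by rw [sum_const, nsmul_eq_mul]
  have ha0 : 0 ≤ a := sum_nonneg fun _ _ => norm_nonneg _
  by_contra! hba
  nlinarith [mul_nonneg hμ (Nat.cast_nonneg (α := ℝ) #Λ)]

theorem ColumnCoherenceLE.bpRecovers {A : Matrix ι κ ℂ} {μ : ℝ} (hA : ColumnCoherenceLE A μ)
    (hμ : 0 ≤ μ) {x : κ → ℂ} {S : ℕ} (hx : (Function.support x).ncard ≤ S)
    (hS : 2 * μ * S < 1 + μ) : BPrecovers A x := by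
  classical
  set Λ := univ.filter (x · ≠ 0)
  have hcard : #Λ ≤ S := by
    rwa [← Set.ncard_coe_finset, show (Λ : Set κ) = Function.support x by ext; simp [Λ]]
  refine bpRecovers_of_nullSpaceProperty A Λ (fun j hj => by simpa [Λ] using hj)
    fun h hh hne => hA.nullSpaceProperty hμ Λ ?_ hh hne
  calc 2 * μ * #Λ ≤ 2 * μ * S := by gcongr
    _ < 1 + μ := hS

end Coherence

section CharacterSums

variable {F : Type*} [Field F] [Fintype F] [DecidableEq F] {ψ : AddChar F ℂ}

theorem norm_sum_addChar_quadratic_sq (hψ : ψ.IsPrimitive) (h2 : (2 : F) ≠ 0)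
    {α : F} (hα : α ≠ 0) (β γ : F) :
    ‖∑ a, ψ (α * a ^ 2 + β * a + γ)‖ ^ 2 = Fintype.card F := by
  set f : F → F := fun a => α * a ^ 2 + β * a + γ
  have key : (∑ a, ψ (f a)) * (starRingEnd ℂ) (∑ a, ψ (f a)) = Fintype.card F :=
    calc _ = ∑ b, ∑ a, ψ (f a - f b) := by
          rw [map_sum, sum_mul_sum, sum_comm]
          simp only [sub_eq_add_neg, AddChar.map_add_eq_mul, AddChar.map_neg_eq_conj]
      _ = ∑ b, ∑ d, ψ (b * (2 * α * d)) * ψ (α * d ^ 2 + β * d) :=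
          sum_congr rfl fun b _ => (Fintype.sum_equiv (Equiv.addLeft b) _ _ fun d => by
            rw [← AddChar.map_add_eq_mul, Equiv.coe_addLeft]; congr 1; simp only [f]; ring).symm
      _ = ∑ d, (∑ b, ψ (b * (2 * α * d))) * ψ (α * d ^ 2 + β * d) := by
          rw [sum_comm]; simp only [sum_mul]
      _ = Fintype.card F := by
          simp only [AddChar.sum_mulShift _ hψ, mul_eq_zero, h2, hα, false_or]
          rw [sum_eq_single 0 (fun d _ hd => by simp [hd]) (by simp)]
          simp
  rw [Complex.mul_conj'] at key
  exact_mod_cast key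

theorem norm_sum_addChar_cubic_sub_le (hψ : ψ.IsPrimitive) (h2 : (2 : F) ≠ 0) (h3 : (3 : F) ≠ 0)
    {k l k' l' : F} (hne : (k, l) ≠ (k', l')) :
    ‖∑ a, ψ (l * a + (k + a) ^ 3 - (l' * a + (k' + a) ^ 3))‖ ≤ Real.sqrt (Fintype.card F) := by
  by_cases hk : k = k'
  · subst hk
    have hl : l - l' ≠ 0 := sub_ne_zero.mpr fun h => hne (by rw [h])
    have hlin : ∀ a, l * a + (k + a) ^ 3 - (l' * a + (k + a) ^ 3) = a * (l - l') :=
      fun a => by ring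
    simp [hlin, AddChar.sum_mulShift _ hψ, hl]
  · have hquad : ∀ a, l * a + (k + a) ^ 3 - (l' * a + (k' + a) ^ 3) =
        3 * (k - k') * a ^ 2 + (l - l' + 3 * (k ^ 2 - k' ^ 2)) * a + (k ^ 3 - k' ^ 3) :=
      fun a => by ring
    rw [← norm_sum_addChar_quadratic_sq hψ h2 (mul_ne_zero h3 (sub_ne_zero.mpr hk))
      (l - l' + 3 * (k ^ 2 - k' ^ 2)) (k ^ 3 - k' ^ 3), Real.sqrt_sq (norm_nonneg _)]
    simp only [hquad, le_refl]

end CharacterSums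

namespace ZMod

theorem finEquiv_apply_eq_natCast {n : ℕ} [NeZero n] (q : Fin n) :
    finEquiv n q = ((q : ℕ) : ZMod n) := by
  obtain ⟨m, rfl⟩ := Nat.exists_eq_succ_of_ne_zero (NeZero.ne n)
  exact (Fin.cast_val_eq_self q).symm

theorem stdAddChar_natCast {n : ℕ} [NeZero n] (m : ℕ) :
    stdAddChar (m : ZMod n) = Complex.exp (2 * Real.pi * Complex.I * m / n) := by
  rw [stdAddChar_apply, toCircle_natCast]

theorem natCast_ne_zero_of_pos_of_lt {m n : ℕ} (h0 : 0 < m) (h : m < n) : (m : ZMod n) ≠ 0 := by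
  rw [Ne, natCast_eq_zero_iff]
  exact fun hd => absurd (Nat.le_of_dvd h0 hd) (by omega)

end ZMod

section Alltop

open ZMod (stdAddChar finEquiv)

noncomputable def alltopWindow (n : ℕ) : Fin n → ℂ :=
  fun q => Complex.exp (2 * Real.pi * Complex.I * (q : ℕ) ^ 3 / n) / Real.sqrt n

variable {n : ℕ} [NeZero n]

theorem gaborMatrix_alltopWindow_apply (q : Fin n) (lam : Fin n × Fin n) :
    gaborMatrix n (alltopWindow n) q lam =
      stdAddChar (finEquiv n lam.2 * finEquiv n q + (finEquiv n lam.1 + finEquiv n q) ^ 3) /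
        Real.sqrt n := by
  have harg : finEquiv n lam.2 * finEquiv n q + (finEquiv n lam.1 + finEquiv n q) ^ 3 =
      (((lam.2 : ℕ) * q + ((lam.1 + q : Fin n) : ℕ) ^ 3 : ℕ) : ZMod n) := by
    rw [← map_add]
    simp only [ZMod.finEquiv_apply_eq_natCast]
    push_cast
    ring
  rw [harg, ZMod.stdAddChar_natCast]
  simp only [gaborMatrix, tfShift, alltopWindow, Matrix.of_apply]
  rw [← mul_div_assoc, ← Complex.exp_add]
  congr 2
  push_cast
  ring

theorem dotc_gaborMatrix_alltopWindow (lam mu : Fin n × Fin n) :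
    dotc ((gaborMatrix n (alltopWindow n))ᵀ lam) ((gaborMatrix n (alltopWindow n))ᵀ mu) =
      (∑ a, stdAddChar (finEquiv n lam.2 * a + (finEquiv n lam.1 + a) ^ 3 -
        (finEquiv n mu.2 * a + (finEquiv n mu.1 + a) ^ 3))) / n := by
  have hsqrt : ((Real.sqrt n : ℝ) : ℂ) * (Real.sqrt n : ℝ) = n := by
    rw [← Complex.ofReal_mul, Real.mul_self_sqrt (Nat.cast_nonneg n), Complex.ofReal_natCast]
  rw [dotc, sum_div]
  refine Fintype.sum_equiv (finEquiv n).toEquiv _ _ fun q => ?_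
  rw [Matrix.transpose_apply, Matrix.transpose_apply, gaborMatrix_alltopWindow_apply,
    gaborMatrix_alltopWindow_apply, map_div₀, Complex.conj_ofReal, ← AddChar.map_neg_eq_conj,
    div_mul_div_comm, hsqrt, ← AddChar.map_add_eq_mul, ← sub_eq_add_neg]
  rfl

theorem columnCoherenceLE_gaborMatrix_alltopWindow (hp : n.Prime) (hn : 5 ≤ n) :
    ColumnCoherenceLE (gaborMatrix n (alltopWindow n)) (1 / Real.sqrt n) where
  dotc_col_self lam := by simp [dotc_gaborMatrix_alltopWindow, ZMod.card, NeZero.ne]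
  norm_dotc_col_le lam mu hne := by
    have := Fact.mk hp
    have h2 : (2 : ZMod n) ≠ 0 := by
      exact_mod_cast ZMod.natCast_ne_zero_of_pos_of_lt (m := 2) (by norm_num) (by omega)
    have h3 : (3 : ZMod n) ≠ 0 := by
      exact_mod_cast ZMod.natCast_ne_zero_of_pos_of_lt (m := 3) (by norm_num) (by omega)
    have hne' : (finEquiv n lam.1, finEquiv n lam.2) ≠ (finEquiv n mu.1, finEquiv n mu.2) :=
      fun h => hne (Prod.ext_iff.mpr (by simpa using h))
    rw [dotc_gaborMatrix_alltopWindow, norm_div, Complex.norm_natCast, ← Real.sqrt_div_self']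
    gcongr
    simpa [ZMod.card] using
      norm_sum_addChar_cubic_sub_le (ZMod.isPrimitive_stdAddChar n) h2 h3 hne'

end Alltop

/-- Let `n ≥ 5` be prime and `g^A` the Alltop window with entries
`g^A_q = n^{-1/2} e^{2πi q³/n}`. If `S < (√n + 1)/2`, then Basis Pursuit recovers every
`S`-sparse `x ∈ ℂ^{n²}` from `y = Ψ_{g^A} x`. -/
theorem alltop_recovery (n : ℕ) (hp : n.Prime) (hn : 5 ≤ n) (S : ℕ)
    (hS : (S : ℝ) < (Real.sqrt n + 1) / 2)
    (gA : Fin n → ℂ)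
    (hgA : ∀ q : Fin n, gA q = Complex.exp (2 * Real.pi * Complex.I * (q : ℕ) ^ 3 / n) / Real.sqrt n)
    (x : Fin n × Fin n → ℂ) (hx : (Function.support x).ncard ≤ S) :
    BPrecovers (gaborMatrix n gA) x := by
  have : NeZero n := ⟨hp.ne_zero⟩
  obtain rfl : gA = alltopWindow n := funext hgA
  have hsqrt : 0 < Real.sqrt n := Real.sqrt_pos.mpr (by exact_mod_cast hp.pos)
  refine (columnCoherenceLE_gaborMatrix_alltopWindow hp hn).bpRecovers (by positivity) hx ?_
  calc 2 * (1 / Real.sqrt n) * S = 2 * S / Real.sqrt n := by ring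
    _ < (Real.sqrt n + 1) / Real.sqrt n := div_lt_div_of_pos_right (by linarith) hsqrt
    _ = 1 + 1 / Real.sqrt n := by field_simp
end

section
/- Let ε_1,…,ε_d be independent random variables each uniformly distributed on the unit circle {z ∈ ℂ : |z| = 1} (a Steinhaus sequence), let a ∈ ℂ^d with a ≠ 0, let κ ∈ (0,1) and u ≥ 0. Then P( |Σ_{j=1}^d ε_j a_j| ≥ u ‖a‖₂ ) ≤ e^{−κ u²} / (1 − κ). -/
open MeasureTheory Complex Matrix

/-!
Rotation invariance of Haar measure makes the monomials `z ^ k` orthonormal on the circle, so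
`∫ |z c + S| ^ (2m) dz = ∑ₖ C(m,k)² |c| ^ (2k) |S| ^ (2(m-k))`. Since `C(m,k) (m-k)! ≤ m!`,
induction on `d` gives the moment bound `E |∑ ε_j a_j| ^ (2m) ≤ m! ‖a‖₂ ^ (2m)`. Summing the
exponential series then gives `E exp (κ |∑ ε_j a_j|² / ‖a‖₂²) ≤ ∑ κⁿ = 1 / (1 - κ)`, and
Markov's inequality for this exponential is the tail bound.
-/

open Finset ComplexConjugate Nat

theorem MeasureTheory.integral_pi_fin_succ {α E : Type*} [MeasurableSpace α]
    [NormedAddCommGroup E] [NormedSpace ℝ E] (μ : Measure α) [SigmaFinite μ] {d : ℕ}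
    {f : (Fin (d + 1) → α) → E} (hf : Integrable f (Measure.pi fun _ => μ)) :
    ∫ x, f x ∂(Measure.pi fun _ => μ)
      = ∫ y, ∫ z, f (Fin.cons z y) ∂μ ∂(Measure.pi fun _ => μ) := by
  have hT := (measurePreserving_piFinSuccAbove (fun _ : Fin (d + 1) => μ) 0).symm
  have hcons : ∀ p : α × (Fin d → α),
      (MeasurableEquiv.piFinSuccAbove (fun _ => α) 0).symm p = Fin.cons p.1 p.2 := fun p => by
    simp [MeasurableEquiv.piFinSuccAbove_symm_apply, Fin.insertNthEquiv, Fin.insertNth_zero']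
  have hint := (hT.integrable_comp_emb (MeasurableEquiv.measurableEmbedding _)).mpr hf
  simp only [Function.comp_def, hcons] at hint
  rw [← hT.integral_comp']
  simp only [hcons]
  exact integral_prod_symm _ hint

theorem Nat.choose_mul_factorial_le {m k : ℕ} (hk : k ≤ m) : m.choose k * (m - k)! ≤ m ! := by
  rw [← Nat.choose_mul_factorial_mul_factorial hk, mul_right_comm]
  exact Nat.le_mul_of_pos_right _ k.factorial_pos

theorem sum_choose_sq_mul_pow_mul_factorial_le (m : ℕ) {x y : ℝ} (hx : 0 ≤ x) (hy : 0 ≤ y) :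
    ∑ k ∈ range (m + 1), (m.choose k : ℝ) ^ 2 * y ^ k * ((m - k)! * x ^ (m - k))
      ≤ m ! * (y + x) ^ m := by
  rw [add_pow, mul_sum]
  refine sum_le_sum fun k hk => ?_
  have hfac : (m.choose k : ℝ) * (m - k)! ≤ m ! := by
    exact_mod_cast Nat.choose_mul_factorial_le (Nat.lt_succ_iff.mp (mem_range.mp hk))
  calc (m.choose k : ℝ) ^ 2 * y ^ k * ((m - k)! * x ^ (m - k))
      = (m.choose k * (m - k)!) * (y ^ k * x ^ (m - k) * m.choose k) := by ring
    _ ≤ m ! * (y ^ k * x ^ (m - k) * m.choose k) := by gcongr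

namespace Circle

variable (μ : Measure Circle) [μ.IsMulLeftInvariant]

theorem integral_zpow_eq_zero {n : ℤ} (hn : n ≠ 0) : ∫ z : Circle, (z : ℂ) ^ n ∂μ = 0 := by
  refine integral_eq_zero_of_mul_left_eq_neg (g := Circle.exp (Real.pi / n)) fun z => ?_
  have hn' : (n : ℂ) ≠ 0 := Int.cast_ne_zero.mpr hn
  have : (n : ℂ) * (↑(Real.pi / n) * I) = Real.pi * I := by push_cast; field_simp
  rw [coe_mul, mul_zpow, coe_exp, ← Complex.exp_int_mul, this, exp_pi_mul_I, neg_one_mul]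

variable [IsProbabilityMeasure μ]

theorem integral_pow_mul_conj_pow (k l : ℕ) :
    ∫ z : Circle, (z : ℂ) ^ k * conj (z : ℂ) ^ l ∂μ = if k = l then 1 else 0 := by
  have h : ∀ z : Circle, (z : ℂ) ^ k * conj (z : ℂ) ^ l = (z : ℂ) ^ ((k : ℤ) - l) := fun z => by
    rw [← coe_inv_eq_conj, coe_inv, zpow_sub₀ z.coe_ne_zero, inv_pow, zpow_natCast, zpow_natCast,
      div_eq_mul_inv]
  simp_rw [h]
  split_ifs with hkl
  · simp [hkl]
  · exact integral_zpow_eq_zero μ (by omega)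

theorem integral_norm_sum_mul_pow_sq (b : ℕ → ℂ) (n : ℕ) :
    ∫ z : Circle, ‖∑ k ∈ range n, b k * (z : ℂ) ^ k‖ ^ 2 ∂μ = ∑ k ∈ range n, ‖b k‖ ^ 2 := by
  have hint : ∀ k l, Integrable
      (fun z : Circle => b k * (z : ℂ) ^ k * (conj (b l) * conj (z : ℂ) ^ l)) μ := fun k l =>
    (by fun_prop : Continuous _).integrable_of_hasCompactSupport (.of_compactSpace _)
  apply ofReal_injective
  rw [← integral_complex_ofReal, ofReal_sum]
  simp_rw [ofReal_pow, ← mul_conj', map_sum, map_mul, map_pow, sum_mul_sum]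
  rw [integral_finsetSum _ fun k _ => integrable_finsetSum _ fun l _ => hint k l]
  refine sum_congr rfl fun k hk => ?_
  rw [integral_finsetSum _ fun l _ => hint k l]
  simp_rw [show ∀ l (z : Circle), b k * (z : ℂ) ^ k * (conj (b l) * conj (z : ℂ) ^ l)
      = b k * conj (b l) * ((z : ℂ) ^ k * conj (z : ℂ) ^ l) from fun _ _ => by ring,
    integral_const_mul, integral_pow_mul_conj_pow, mul_ite, mul_one, mul_zero, sum_ite_eq,
    if_pos hk]

theorem integral_norm_mul_add_pow (c S : ℂ) (m : ℕ) :
    ∫ z : Circle, ‖(z : ℂ) * c + S‖ ^ (2 * m) ∂μ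
      = ∑ k ∈ range (m + 1), (m.choose k : ℝ) ^ 2 * ‖c‖ ^ (2 * k) * ‖S‖ ^ (2 * (m - k)) := by
  have hexpand : ∀ z : Circle, ‖(z : ℂ) * c + S‖ ^ (2 * m)
      = ‖∑ k ∈ range (m + 1), c ^ k * S ^ (m - k) * m.choose k * (z : ℂ) ^ k‖ ^ 2 := fun z => by
    rw [mul_comm 2, pow_mul, ← norm_pow, add_pow]
    congr 2
    exact sum_congr rfl fun k _ => by ring
  simp_rw [hexpand, integral_norm_sum_mul_pow_sq, norm_mul, norm_pow, norm_natCast]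
  exact sum_congr rfl fun k _ => by ring

theorem integral_norm_sum_mul_pow_le (d m : ℕ) (a : Fin d → ℂ) :
    ∫ e, ‖∑ j, (e j : ℂ) * a j‖ ^ (2 * m) ∂(Measure.pi fun _ => μ)
      ≤ m ! * (∑ j, ‖a j‖ ^ 2) ^ m := by
  induction d generalizing m with
  | zero =>
    simpa [pow_mul] using le_mul_of_one_le_left (by positivity) (one_le_cast.mpr m.factorial_pos)
  | succ d ih =>
    have hcont : ∀ n, Continuous fun e : Fin d → Circle => ‖∑ j, (e j : ℂ) * a j.succ‖ ^ n :=
      fun n => by fun_prop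
    rw [integral_pi_fin_succ μ ((by fun_prop : Continuous _).integrable_of_hasCompactSupport
      (.of_compactSpace _))]
    simp_rw [Fin.sum_univ_succ, Fin.cons_zero, Fin.cons_succ, integral_norm_mul_add_pow]
    rw [integral_finsetSum _ fun k _ => ((hcont _).integrable_of_hasCompactSupport
      (.of_compactSpace _)).const_mul _]
    simp_rw [integral_const_mul, pow_mul]
    refine (sum_le_sum fun k _ => ?_).trans
      (sum_choose_sq_mul_pow_mul_factorial_le m (by positivity) (by positivity))
    gcongr
    simpa only [pow_mul] using ih (m - k) (fun j => a j.succ)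

end Circle

theorem ENNReal.ofReal_exp_eq_tsum {t : ℝ} (ht : 0 ≤ t) :
    ENNReal.ofReal (Real.exp t) = ∑' n : ℕ, ENNReal.ofReal (t ^ n / n !) := by
  rw [Real.exp_eq_exp_ℝ, NormedSpace.exp_eq_tsum_div,
    ENNReal.ofReal_tsum_of_nonneg (fun n => by positivity) (Real.summable_pow_div_factorial t)]

theorem lintegral_exp_le_of_moment_le {X : Type*} [MeasurableSpace X] (P : Measure X)
    {g : X → ℝ} (hg : Measurable g) (hg0 : ∀ x, 0 ≤ g x)
    (hgi : ∀ n : ℕ, Integrable (fun x => g x ^ n) P) {A κ : ℝ} (hA : 0 < A) (hκ0 : 0 ≤ κ)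
    (hκ1 : κ < 1) (hmom : ∀ n : ℕ, ∫ x, g x ^ n ∂P ≤ n ! * A ^ n) :
    ∫⁻ x, ENNReal.ofReal (Real.exp (κ * g x / A)) ∂P ≤ ENNReal.ofReal (1 - κ)⁻¹ := by
  have hterm : ∀ n : ℕ, ∫⁻ x, ENNReal.ofReal ((κ * g x / A) ^ n / n !) ∂P
      ≤ ENNReal.ofReal (κ ^ n) := fun n => calc
    _ = ∫⁻ x, ENNReal.ofReal (κ ^ n / A ^ n / n !) * ENNReal.ofReal (g x ^ n) ∂P := by
        refine lintegral_congr fun x => ?_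
        rw [← ENNReal.ofReal_mul (by positivity)]
        congr 1
        ring
    _ = ENNReal.ofReal (κ ^ n / A ^ n / n !) * ENNReal.ofReal (∫ x, g x ^ n ∂P) := by
        rw [lintegral_const_mul _ (hg.pow_const n).ennreal_ofReal,
          ofReal_integral_eq_lintegral_ofReal (hgi n) (.of_forall fun x => pow_nonneg (hg0 x) n)]
    _ ≤ ENNReal.ofReal (κ ^ n / A ^ n / n !) * ENNReal.ofReal (n ! * A ^ n) := by
        gcongr
        exact hmom n
    _ = ENNReal.ofReal (κ ^ n) := by
        rw [← ENNReal.ofReal_mul (by positivity)]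
        congr 1
        field_simp
  calc ∫⁻ x, ENNReal.ofReal (Real.exp (κ * g x / A)) ∂P
      = ∑' n : ℕ, ∫⁻ x, ENNReal.ofReal ((κ * g x / A) ^ n / n !) ∂P := by
        simp_rw [ENNReal.ofReal_exp_eq_tsum (div_nonneg (mul_nonneg hκ0 (hg0 _)) hA.le)]
        exact lintegral_tsum fun n => by fun_prop
    _ ≤ ∑' n : ℕ, ENNReal.ofReal (κ ^ n) := ENNReal.tsum_le_tsum hterm
    _ = ENNReal.ofReal (1 - κ)⁻¹ := by
        rw [← ENNReal.ofReal_tsum_of_nonneg (fun n => by positivity)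
          (summable_geometric_of_lt_one hκ0 hκ1), tsum_geometric_of_lt_one hκ0 hκ1]

theorem measure_ge_le_exp_neg_mul_lintegral_exp {X : Type*} [MeasurableSpace X] (P : Measure X)
    {g : X → ℝ} (hg : AEMeasurable g P) (t : ℝ) :
    P {x | t ≤ g x}
      ≤ ENNReal.ofReal (Real.exp (-t)) * ∫⁻ x, ENNReal.ofReal (Real.exp (g x)) ∂P := by
  have hexp : ENNReal.ofReal (Real.exp (-t)) * ENNReal.ofReal (Real.exp t) = 1 := by
    rw [← ENNReal.ofReal_mul (Real.exp_pos _).le, ← Real.exp_add, neg_add_cancel, Real.exp_zero,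
      ENNReal.ofReal_one]
  calc P {x | t ≤ g x}
      = ENNReal.ofReal (Real.exp (-t)) * (ENNReal.ofReal (Real.exp t) * P {x | t ≤ g x}) := by
        rw [← mul_assoc, hexp, one_mul]
    _ ≤ ENNReal.ofReal (Real.exp (-t)) * (ENNReal.ofReal (Real.exp t) *
          P {x | ENNReal.ofReal (Real.exp t) ≤ ENNReal.ofReal (Real.exp (g x))}) := by
        gcongr
        exact fun hx => ENNReal.ofReal_le_ofReal (Real.exp_le_exp.mpr hx)
    _ ≤ _ := by
        gcongr
        exact mul_meas_ge_le_lintegral₀ (by fun_prop) _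

instance : circleHaar.IsMulLeftInvariant := Measure.isMulLeftInvariant_haarMeasure _

/-- (Bernstein-type inequality for Steinhaus sequences.) For independent
Haar-uniform `ε_1, …, ε_d` on the unit circle, `a ∈ ℂ^d`, `a ≠ 0`, `κ ∈ (0,1)` and `u ≥ 0`:
`P(|∑_j ε_j a_j| ≥ u ‖a‖₂) ≤ e^{−κu²}/(1−κ)`. -/
theorem steinhaus_bernstein (d : ℕ) (a : Fin d → ℂ) (ha : a ≠ 0)
    (κ u : ℝ) (hκ : κ ∈ Set.Ioo (0 : ℝ) 1) (hu : 0 ≤ u) :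
    (Measure.pi fun _ : Fin d => circleHaar)
        {e | u * l2norm a ≤ ‖∑ j, ((e j : Circle) : ℂ) * a j‖}
      ≤ ENNReal.ofReal (Real.exp (-κ * u ^ 2) / (1 - κ)) := by
  obtain ⟨hκ0, hκ1⟩ := hκ
  set A := ∑ j, ‖a j‖ ^ 2
  have hA : 0 < A := by
    obtain ⟨j, hj⟩ := Function.ne_iff.mp ha
    exact sum_pos' (fun i _ => by positivity) ⟨j, mem_univ j, pow_pos (norm_pos_iff.mpr hj) 2⟩
  have hl2 : l2norm a ^ 2 = A := Real.sq_sqrt hA.le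
  set g := fun e : Fin d → Circle => ‖∑ j, (e j : ℂ) * a j‖ ^ 2
  have hg : Continuous g := by fun_prop
  have hsub : {e : Fin d → Circle | u * l2norm a ≤ ‖∑ j, (e j : ℂ) * a j‖}
      ⊆ {e | κ * u ^ 2 ≤ κ * g e / A} := fun e (he : u * l2norm a ≤ _) => by
    have hsq : (u * l2norm a) ^ 2 ≤ g e :=
      pow_le_pow_left₀ (mul_nonneg hu (Real.sqrt_nonneg _)) he 2
    rw [mul_pow, hl2] at hsq
    rw [Set.mem_ofPred_eq, le_div_iff₀ hA]
    nlinarith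
  calc _ ≤ _ := measure_mono hsub
    _ ≤ _ := measure_ge_le_exp_neg_mul_lintegral_exp _
          ((hg.const_mul κ).div_const A).measurable.aemeasurable _
    _ ≤ ENNReal.ofReal (Real.exp (-(κ * u ^ 2))) * ENNReal.ofReal (1 - κ)⁻¹ := by
        gcongr
        refine lintegral_exp_le_of_moment_le _ hg.measurable (fun _ => by positivity)
          (fun n => (hg.pow n).integrable_of_hasCompactSupport (.of_compactSpace _))
          hA hκ0.le hκ1 fun n => ?_
        simpa only [g, ← pow_mul] using Circle.integral_norm_sum_mul_pow_le circleHaar d n a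
    _ = _ := by rw [← ENNReal.ofReal_mul (Real.exp_pos _).le, neg_mul, div_eq_mul_inv]
end
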